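/- Let (m,n) be a coprime pair of positive integers, let R ≠ R_0 = {0,1,…,m+n−1} be the rank set of an (m,n)-Dyck path with sorted sequence 𝔯_1<…<𝔯_{m+n} and SW-sequence σ, let s = σ^{-1}(W_1) be the position of the first W in σ, and let 𝔯^L be the sorted sequence of ℒ(R). Then n − 𝔯_2 equals the (s−1)-st smallest element of ℒ(R), i.e., 𝔯_2 = n − 𝔯^L_{s−1}, and R can be recovered from (ℒ(R), σ) by R = ((𝔯_2 + ℒ(R)) ∖ {m+n}) ∪ {0}, where 𝔯_2 + ℒ(R) = {𝔯_2 + x : x ∈ ℒ(R)}. -/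

import Mathlib

/-- The list of ranks of the lattice points visited by a path (excluding the final
point), starting from rank `r`.  A `true` entry is a north (`u`) step, which adds `m`
to the rank; a `false` entry is an east (`d`) step, which subtracts `n`. -/
def rankWalk (m n : ℤ) : List Bool → ℤ → List ℤ
  | [], _ => []
  | b :: bs, r => r :: rankWalk m n bs (r + if b then m else -n)

/-- An `(m,n)`-path: a word of `n` north steps (`true`) and `m` east steps (`false`). -/
def IsPathWord (m n : ℕ) (P : List Bool) : Prop :=
  P.length = m + n ∧ P.count true = n

/-- An `(m,n)`-Dyck path: an `(m,n)`-path all of whose ranks are nonnegative. -/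
def IsDyckWord (m n : ℕ) (P : List Bool) : Prop :=
  IsPathWord m n P ∧ ∀ r ∈ rankWalk (m : ℤ) (n : ℤ) P 0, 0 ≤ r

/-- The rank set of a path: the ranks of its `m+n` lattice points other than the endpoint. -/
def rankSet (m n : ℕ) (P : List Bool) : Finset ℤ :=
  (rankWalk (m : ℤ) (n : ℤ) P 0).toFinset

/-- `R` is the rank set of some `(m,n)`-path. -/
def IsRankSet (m n : ℕ) (R : Finset ℤ) : Prop :=
  ∃ P : List Bool, IsPathWord m n P ∧ rankSet m n P = R

/-- `R` is the rank set of some `(m,n)`-Dyck path. -/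
def IsDyckRankSet (m n : ℕ) (R : Finset ℤ) : Prop :=
  ∃ P : List Bool, IsDyckWord m n P ∧ rankSet m n P = R

/-- The SW-sequence of a (Dyck path) rank set `R`, reading the sorted ranks from left
to right: `true` (= the letter `S`) at rank `r` iff `r + m ∈ R`, i.e. `r ∈ S(R) = R ∩ (R - m)`;
otherwise `false` (= the letter `W`). -/
def swSeq (m : ℕ) (R : Finset ℤ) : List Bool :=
  (R.sort (· ≤ ·)).map (fun r => decide (r + (m : ℤ) ∈ R))

/-- The 1-based position of the `j`-th (1-based) occurrence of the letter `b` in the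
word `w`; e.g. `nthPos w false j` is the position `σ⁻¹(W_j)` of the `j`-th `W`. -/
def nthPos (w : List Bool) (b : Bool) (j : ℕ) : ℕ :=
  ((List.range w.length).filter (fun p => w.getD p (!b) == b)).getD (j - 1) 0 + 1

/-- `𝔯_i`, the `i`-th smallest element of `R` (1-based). -/
def sortedRank (R : Finset ℤ) (i : ℕ) : ℤ :=
  (R.sort (· ≤ ·)).getD (i - 1) 0

/-- The rank set `R₀ = {0, 1, …, m+n-1}` of the unique Dyck path of area `0`. -/
def baseRankSet (m n : ℕ) : Finset ℤ :=
  (Finset.range (m + n)).image (fun i : ℕ => (i : ℤ))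

/-- The left operation `ℒ(R) = ((R \ {0}) ∪ {m+n}) - min (R \ {0})`. -/
def leftOp (m n : ℕ) (R : Finset ℤ) : Finset ℤ :=
  ((R.erase 0) ∪ {((m : ℤ) + n)}).image
    (fun r => r - WithTop.untopD 0 (R.erase 0).min)

/-!
The ranks below `n` all carry an `S`: a rank `r < n` cannot be followed by the negative rank
`r - n`. The rank `n` itself occurs (it precedes the final point, of rank `0`) and carries a `W`,
because `m + n` is not a rank: the `i`-th rank is `≡ m i (mod m + n)` and `m` is a unit modulo
`m + n`, so only the starting point has rank `≡ 0`. Hence `s - 1 = #{r ∈ R | r < n}`. Since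
`ℒ(R)` is `(R \ {0}) ∪ {m + n}` translated by `-𝔯_2`, its `(s - 1)`-st element is `n - 𝔯_2`,
and translating back and deleting `m + n ∉ R` returns `R \ {0}`.
-/

open Finset

theorem Finset.getD_sort_card_filter_lt {α : Type*} [LinearOrder α] (s : Finset α) {a : α}
    (ha : a ∈ s) (d : α) : s.sort.getD #{x ∈ s | x < a} d = a := by
  set f := s.orderEmbOfFin rfl
  obtain ⟨i, rfl⟩ : a ∈ Set.range f := by rwa [range_orderEmbOfFin]
  have hfilter : {x ∈ s | x < f i} = (Iio i).map f.toEmbedding := by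
    ext x
    simp only [mem_filter, mem_map, mem_Iio]
    constructor
    · rintro ⟨hxs, hxi⟩
      obtain ⟨j, rfl⟩ : x ∈ Set.range f := by rwa [range_orderEmbOfFin]
      exact ⟨j, f.lt_iff_lt.1 hxi, rfl⟩
    · rintro ⟨j, hj, rfl⟩
      exact ⟨orderEmbOfFin_mem _ _ _, f.lt_iff_lt.2 hj⟩
  rw [hfilter, card_map, Fin.card_Iio, List.getD_eq_getElem _ _ (by simp)]
  rfl

theorem Finset.getD_sort_lt_getD_sort {α : Type*} [LinearOrder α] {s : Finset α} {i j : ℕ}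
    (hij : i < j) (hj : j < #s) (d : α) : s.sort.getD i d < s.sort.getD j d := by
  rw [List.getD_eq_getElem _ _ (by simp; omega), List.getD_eq_getElem _ _ (by simpa)]
  exact s.sortedLT_sort.getElem_lt_getElem_iff.2 hij

theorem Finset.getD_sort_mem {α : Type*} [LinearOrder α] {s : Finset α} {i : ℕ}
    (hi : i < #s) (d : α) : s.sort.getD i d ∈ s := by
  rw [List.getD_eq_getElem _ _ (by simpa using hi)]
  exact (mem_sort _).1 (List.getElem_mem _)

section RankWalk

variable (m n : ℤ)

def walkEnd (P : List Bool) (c : ℤ) : ℤ :=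
  c + m * P.count true - n * P.count false

@[simp]
lemma length_rankWalk : ∀ (P : List Bool) (c : ℤ), (rankWalk m n P c).length = P.length
  | [], _ => rfl
  | _ :: bs, _ => by simp [rankWalk, length_rankWalk bs]

lemma walkEnd_cons (b : Bool) (bs : List Bool) (c : ℤ) :
    walkEnd m n (b :: bs) c = walkEnd m n bs (c + if b then m else -n) := by
  cases b <;> simp [walkEnd] <;> ring

lemma mem_rankWalk_self {P : List Bool} (hP : P ≠ []) (c : ℤ) : c ∈ rankWalk m n P c := by
  obtain ⟨b, bs, rfl⟩ := List.exists_cons_of_ne_nil hP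
  exact List.mem_cons_self ..

lemma mem_walkEnd_cons_rankWalk_self (P : List Bool) (c : ℤ) :
    c ∈ walkEnd m n P c :: rankWalk m n P c := by
  cases P with
  | nil => simp [walkEnd]
  | cons b bs => exact List.mem_cons_of_mem _ (mem_rankWalk_self m n (List.cons_ne_nil b bs) c)

lemma add_mem_or_sub_mem_of_mem_rankWalk : ∀ (P : List Bool) (c : ℤ), ∀ r ∈ rankWalk m n P c,
    r + m ∈ walkEnd m n P c :: rankWalk m n P c ∨ r - n ∈ walkEnd m n P c :: rankWalk m n P c
  | [], _ => by simp [rankWalk]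
  | b :: bs, c => by
    set c' := c + if b then m else -n
    have hsub : ∀ x ∈ walkEnd m n bs c' :: rankWalk m n bs c',
        x ∈ walkEnd m n (b :: bs) c :: rankWalk m n (b :: bs) c := by
      simp only [walkEnd_cons, rankWalk, List.mem_cons]
      tauto
    intro r hr
    rcases List.mem_cons.1 hr with rfl | hr
    · have hc' := hsub _ (mem_walkEnd_cons_rankWalk_self m n bs c')
      cases b
      · exact Or.inr (by simpa [c', sub_eq_add_neg] using hc')
      · exact Or.inl (by simpa [c'] using hc')
    · exact (add_mem_or_sub_mem_of_mem_rankWalk bs c' r hr).imp (hsub _) (hsub _)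

lemma exists_mem_rankWalk_walkEnd_eq : ∀ (P : List Bool) (c : ℤ), P ≠ [] →
    ∃ r ∈ rankWalk m n P c, walkEnd m n P c = r + m ∨ walkEnd m n P c = r - n
  | [], _, h => absurd rfl h
  | [b], c, _ => ⟨c, by simp [rankWalk], by cases b <;> simp [walkEnd, sub_eq_add_neg]⟩
  | b :: b' :: bs, c, _ => by
    obtain ⟨r, hr, h⟩ := exists_mem_rankWalk_walkEnd_eq (b' :: bs) _ (List.cons_ne_nil _ _)
    exact ⟨r, List.mem_cons_of_mem _ hr, by rwa [walkEnd_cons]⟩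

lemma rankWalk_getElem_modEq :
    ∀ (P : List Bool) (c : ℤ) (i : ℕ) (hi : i < (rankWalk m n P c).length),
    (rankWalk m n P c)[i] ≡ c + m * i [ZMOD m + n]
  | [], _, _, hi => by simp [rankWalk] at hi
  | b :: bs, c, 0, _ => by simp [rankWalk]
  | b :: bs, c, i + 1, hi => by
    refine (rankWalk_getElem_modEq bs _ i _).trans ?_
    rw [Int.modEq_iff_dvd]
    cases b
    · exact ⟨1, by simp; ring⟩
    · exact ⟨0, by simp; ring⟩

end RankWalk

namespace IsPathWord

variable {m n : ℕ} {P : List Bool}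

lemma walkEnd_eq_zero (hP : IsPathWord m n P) : walkEnd m n P 0 = 0 := by
  have hcount := List.count_false_add_count_true P
  have hfalse : P.count false = m := by rw [hP.1, hP.2] at hcount; omega
  rw [walkEnd, hP.2, hfalse]
  ring

lemma ne_nil (hP : IsPathWord m n P) (h : 0 < m + n) : P ≠ [] := by
  rintro rfl
  simp [IsPathWord] at hP
  omega

end IsPathWord

namespace IsDyckRankSet

variable {m n : ℕ} {R : Finset ℤ}

lemma nonneg (hR : IsDyckRankSet m n R) : ∀ r ∈ R, 0 ≤ r := by
  obtain ⟨P, hP, rfl⟩ := hR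
  intro r hr
  exact hP.2 r (List.mem_toFinset.1 hr)

lemma zero_mem (hR : IsDyckRankSet m n R) (h : 0 < m + n) : 0 ∈ R := by
  obtain ⟨P, hP, rfl⟩ := hR
  exact List.mem_toFinset.2 (mem_rankWalk_self _ _ (hP.1.ne_nil h) 0)

lemma add_mem_of_lt (hR : IsDyckRankSet m n R) (h : 0 < m + n) {r : ℤ} (hr : r ∈ R)
    (hrn : r < n) : r + m ∈ R := by
  have h0 := hR.zero_mem h
  have hnn := hR.nonneg
  obtain ⟨P, hP, rfl⟩ := hR
  have hstep := add_mem_or_sub_mem_of_mem_rankWalk m n P 0 r (List.mem_toFinset.1 hr)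
  rw [hP.1.walkEnd_eq_zero] at hstep
  have hmem : ∀ x ∈ (0 : ℤ) :: rankWalk m n P 0, x ∈ (rankWalk m n P 0).toFinset := by
    simpa [rankSet] using h0
  rcases hstep with h | h
  · exact hmem _ h
  · have := hnn _ (hmem _ h)
    omega

lemma natCast_mem (hR : IsDyckRankSet m n R) (hm : 0 < m) : (n : ℤ) ∈ R := by
  have hnn := hR.nonneg
  obtain ⟨P, hP, rfl⟩ := hR
  obtain ⟨r, hr, hend⟩ := exists_mem_rankWalk_walkEnd_eq m n P 0 (hP.1.ne_nil (by omega))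
  have hr0 := hnn r (List.mem_toFinset.2 hr)
  rw [hP.1.walkEnd_eq_zero] at hend
  obtain rfl : r = n := by omega
  exact List.mem_toFinset.2 hr

lemma add_notMem (hR : IsDyckRankSet m n R) (hcop : Nat.Coprime m n) :
    (m + n : ℤ) ∉ R := by
  obtain ⟨P, hP, rfl⟩ := hR
  intro hmem
  obtain ⟨i, hi, hrank⟩ := List.mem_iff_getElem.1 (List.mem_toFinset.1 hmem)
  have hdvd : m + n ∣ m * i := by
    have := (rankWalk_getElem_modEq m n P 0 i hi).symm.dvd
    rw [hrank, zero_add, dvd_sub_self_left] at this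
    exact_mod_cast this
  have hlen : i < m + n := by rwa [length_rankWalk, hP.1.1] at hi
  obtain rfl : i = 0 :=
    Nat.eq_zero_of_dvd_of_lt ((Nat.coprime_self_add_left.2 hcop.symm).dvd_of_dvd_mul_left hdvd)
      hlen
  obtain ⟨b, bs, rfl⟩ := List.exists_cons_of_ne_nil (hP.1.ne_nil (by omega))
  simp [rankWalk] at hrank
  omega

end IsDyckRankSet

lemma sortedRank_card_filter_lt_add_one {T : Finset ℤ} {a : ℤ} (ha : a ∈ T) :
    sortedRank T (#{x ∈ T | x < a} + 1) = a :=
  T.getD_sort_card_filter_lt ha 0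

lemma nthPos_false_one_eq {w : List Bool} {k : ℕ} (hk : k < w.length)
    (htrue : ∀ p < k, w.getD p true = true) (hfalse : w.getD k true = false) :
    nthPos w false 1 = k + 1 := by
  unfold nthPos
  congr 1
  have hlen : w.length = k + (w.length - k - 1 + 1) := by omega
  rw [hlen, List.range_add, List.filter_append, List.range_succ_eq_map, List.map_cons]
  have hprefix : (List.range k).filter (fun p => w.getD p (!false) == false) = [] :=
    List.filter_eq_nil_iff.2 fun p hp => by simpa using htrue p (List.mem_range.1 hp)
  rw [hprefix, List.nil_append, List.filter_cons, if_pos (by simpa using hfalse)]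
  rfl

section LeftOp

variable {m n : ℕ} {R : Finset ℤ}

lemma swSeq_getD {p : ℕ} (hp : p < #R) :
    (swSeq m R).getD p true = decide (R.sort.getD p 0 + m ∈ R) := by
  rw [swSeq, List.getD_eq_getElem _ _ (by simpa using hp), List.getElem_map,
    List.getD_eq_getElem _ _ (by simpa using hp)]

lemma nthPos_swSeq_false_one (hnR : (n : ℤ) ∈ R) (hS : ∀ r ∈ R, r < n → r + m ∈ R)
    (hW : (m + n : ℤ) ∉ R) : nthPos (swSeq m R) false 1 = #{r ∈ R | r < (n : ℤ)} + 1 := by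
  set k := #{r ∈ R | r < (n : ℤ)}
  have hk : k < #R := card_lt_card (filter_ssubset.2 ⟨n, hnR, lt_irrefl _⟩)
  have hsort_k : R.sort.getD k 0 = n := R.getD_sort_card_filter_lt hnR 0
  refine nthPos_false_one_eq (by simpa [swSeq] using hk) (fun p hp => ?_) ?_
  · rw [swSeq_getD (hp.trans hk), decide_eq_true_eq]
    refine hS _ (getD_sort_mem (hp.trans hk) 0) ?_
    rw [← hsort_k]
    exact getD_sort_lt_getD_sort hp hk 0
  · rw [swSeq_getD hk, hsort_k, add_comm]
    simpa using hW

lemma isLeast_sortedRank_two (h0 : 0 ∈ R) (hnn : ∀ r ∈ R, 0 ≤ r) (hne : (R.erase 0).Nonempty) :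
    IsLeast (R.erase 0 : Set ℤ) (sortedRank R 2) := by
  set e := (R.erase 0).min' hne
  have he := (R.erase 0).isLeast_min' hne
  have hfilter : {x ∈ R | x < e} = {0} := by
    ext x
    simp only [mem_filter, mem_singleton]
    constructor
    · rintro ⟨hxR, hxe⟩
      by_contra hx0
      exact (he.2 (mem_erase.2 ⟨hx0, hxR⟩)).not_gt hxe
    · rintro rfl
      exact ⟨h0, lt_of_le_of_ne (hnn e (mem_of_mem_erase he.1)) (ne_of_mem_erase he.1).symm⟩
  have := sortedRank_card_filter_lt_add_one (mem_of_mem_erase he.1)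
  rw [hfilter, card_singleton] at this
  rwa [this]

lemma leftOp_eq_image_sub {e : ℤ} (he : IsLeast (R.erase 0 : Set ℤ) e) :
    leftOp m n R = (insert (m + n : ℤ) (R.erase 0)).image (· - e) := by
  have hmin : (R.erase 0).min' ⟨e, he.1⟩ = e := (isLeast_min' _ _).unique he
  rw [leftOp, ← coe_min' ⟨e, he.1⟩, hmin, WithTop.untopD_coe, union_comm, ← insert_eq]

lemma sortedRank_leftOp_card_filter_lt {e : ℤ} (he : IsLeast (R.erase 0 : Set ℤ) e) (h0 : 0 ∈ R)
    (hn : 0 < n) (hnR : (n : ℤ) ∈ R) :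
    sortedRank (leftOp m n R) #{r ∈ R | r < (n : ℤ)} = n - e := by
  rw [leftOp_eq_image_sub he]
  set T := insert (m + n : ℤ) (R.erase 0)
  have hfilter : {x ∈ T | x - e < n - e} = {r ∈ R | r < (n : ℤ)}.erase 0 := by
    ext x
    simp only [T, mem_filter, mem_insert, mem_erase, sub_lt_sub_iff_right]
    by_cases hx : x ∈ R <;> simp [hx] <;> omega
  have hcard : #{x ∈ T.image (· - e) | x < n - e} + 1 = #{r ∈ R | r < (n : ℤ)} := by
    rw [filter_image, card_image_of_injective _ sub_left_injective, hfilter,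
      card_erase_add_one (mem_filter.2 ⟨h0, by exact_mod_cast hn⟩)]
  rw [← hcard]
  exact sortedRank_card_filter_lt_add_one
    (mem_image_of_mem _ (mem_insert_of_mem (mem_erase.2 ⟨by positivity, hnR⟩)))

lemma insert_zero_erase_image_add_leftOp {e : ℤ} (he : IsLeast (R.erase 0 : Set ℤ) e)
    (h0 : 0 ∈ R) (hW : (m + n : ℤ) ∉ R) :
    insert 0 (((leftOp m n R).image (e + ·)).erase (m + n : ℤ)) = R := by
  have hcancel : (e + ·) ∘ (· - e) = id := funext fun x => add_sub_cancel e x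
  rw [leftOp_eq_image_sub he, image_image, hcancel, image_id,
    erase_insert fun h => hW (mem_of_mem_erase h), insert_erase h0]

end LeftOp

theorem recover_from_leftOp_general (m n : ℕ) (hm : 0 < m) (hn : 0 < n)
    (hcop : Nat.Coprime m n) (R : Finset ℤ) (hR : IsDyckRankSet m n R) :
    sortedRank R 2 = (n : ℤ) - sortedRank (leftOp m n R) (nthPos (swSeq m R) false 1 - 1) ∧
    R = insert (0 : ℤ)
      (((leftOp m n R).image (fun x => sortedRank R 2 + x)).erase ((m : ℤ) + n)) := by
  have h0 := hR.zero_mem (by omega)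
  have hnR := hR.natCast_mem hm
  have hW := hR.add_notMem hcop
  have he := isLeast_sortedRank_two h0 hR.nonneg ⟨n, mem_erase.2 ⟨by positivity, hnR⟩⟩
  refine ⟨?_, (insert_zero_erase_image_add_leftOp he h0 hW).symm⟩
  rw [nthPos_swSeq_false_one hnR (fun r hr hrn => hR.add_mem_of_lt (by omega) hr hrn) hW,
    Nat.add_sub_cancel, sortedRank_leftOp_card_filter_lt he h0 hn hnR]
  ring

/-- Let `R ≠ R₀` be the rank set of an `(m,n)`-Dyck path with sorted
sequence `𝔯_1 < ⋯ < 𝔯_{m+n}` and SW-sequence `σ`, let `s = σ⁻¹(W_1)` and let `𝔯^L` be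
the sorted sequence of `ℒ(R)`.  Then `𝔯_2 = n - 𝔯^L_{s-1}`, and `R` can be recovered
from `(ℒ(R), σ)` by `R = ((𝔯_2 + ℒ(R)) \ {m+n}) ∪ {0}`. -/
theorem recover_from_leftOp (m n : ℕ) (hm : 0 < m) (hn : 0 < n)
    (hcop : Nat.Coprime m n) (R : Finset ℤ) (hR : IsDyckRankSet m n R)
    (hne : R ≠ baseRankSet m n) :
    sortedRank R 2 = (n : ℤ) - sortedRank (leftOp m n R) (nthPos (swSeq m R) false 1 - 1) ∧
    R = insert (0 : ℤ)
      (((leftOp m n R).image (fun x => sortedRank R 2 + x)).erase ((m : ℤ) + n)) :=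
  recover_from_leftOp_general m n hm hn hcop R hR
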